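/- arXiv:2310.17067 — 2 statements merged into one kernel-verified Lean document; each statement's English description precedes it below -/
import Mathlib

section
/- Let k ∈ 𝕊², let g ∈ A_k(𝔹⁴), and let i ∈ 𝕊². Then ( ∫_D ‖ g(x + i y) − g(x + k y) ‖² dμ(x,y) )^{1/2} ≤ √2 · ‖i − k‖ · ‖g‖_{A_k(𝔹⁴)}. -/
noncomputable section

open MeasureTheory Filter

notation "ℍ" => Quaternion ℝ

/-- The set of pure imaginary unit quaternions `𝕊²`. -/
def Sph2 (i : ℍ) : Prop := i.re = 0 ∧ ‖i‖ = 1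

/-- Ordered pairs of orthogonal pure imaginary unit quaternions (the set `T`). -/
def OrthPair (i j : ℍ) : Prop := Sph2 i ∧ Sph2 j ∧ (i * star j).re = 0

/-- The slice complex plane `ℂ(i) = {x + y i}`. -/
def CC (i : ℍ) : Set ℍ := {q | ∃ x y : ℝ, q = (x : ℍ) + y • i}

/-- Slice regularity of `f` on `Ω`: real differentiability together with the
Cauchy–Riemann condition `½(∂/∂x + i ∂/∂y) f = 0` on every slice. -/
def SliceRegularOn (f : ℍ → ℍ) (Ω : Set ℍ) : Prop :=
  ∀ ⦃i : ℍ⦄, Sph2 i → ∀ x y : ℝ, ((x : ℍ) + y • i) ∈ Ω →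
    DifferentiableAt ℝ f ((x : ℍ) + y • i) ∧
    fderiv ℝ f ((x : ℍ) + y • i) 1 + i * fderiv ℝ f ((x : ℍ) + y • i) i = 0

/-- Axially symmetric slice domain. -/
structure AxSymSDomain (Ω : Set ℍ) : Prop where
  isOpen : IsOpen Ω
  isConnected : IsConnected Ω
  real_nonempty : (Ω ∩ Set.range ((↑) : ℝ → ℍ)).Nonempty
  slice_connected : ∀ ⦃i : ℍ⦄, Sph2 i →
    IsConnected {p : ℝ × ℝ | ((p.1 : ℍ) + p.2 • i) ∈ Ω}
  axial : ∀ (x y : ℝ) ⦃i : ℍ⦄, Sph2 i → ((x : ℍ) + y • i) ∈ Ω →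
    ∀ ⦃j : ℍ⦄, Sph2 j → ((x : ℍ) + y • j) ∈ Ω

/-- The slice `Ω ∩ ℂ(i)` as a subset of `ℝ²`. -/
def sliceSet (Ω : Set ℍ) (i : ℍ) : Set (ℝ × ℝ) := {p | ((p.1 : ℍ) + p.2 • i) ∈ Ω}

/-- `‖f‖²_{A_i(Ω)} = ∫_{Ω ∩ ℂ(i)} ‖f‖² dσ_i`. -/
def bergmanNormSq (Ω : Set ℍ) (i : ℍ) (f : ℍ → ℍ) : ℝ :=
  ∫ p in sliceSet Ω i, ‖f ((p.1 : ℍ) + p.2 • i)‖ ^ 2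

/-- The slice regular Bergman norm `‖f‖_{A_i(Ω)}`. -/
def bergmanNorm (Ω : Set ℍ) (i : ℍ) (f : ℍ → ℍ) : ℝ :=
  Real.sqrt (bergmanNormSq Ω i f)

/-- Membership in the slice regular Bergman space `A_i(Ω)`. -/
def MemBergman (Ω : Set ℍ) (i : ℍ) (f : ℍ → ℍ) : Prop :=
  SliceRegularOn f Ω ∧
  IntegrableOn (fun p : ℝ × ℝ => ‖f ((p.1 : ℍ) + p.2 • i)‖ ^ 2) (sliceSet Ω i)

/-- The quaternionic Bergman inner product `⟨f,g⟩ = ∫ conj(f) g dσ_i`. -/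
def bergmanInner (Ω : Set ℍ) (i : ℍ) (f g : ℍ → ℍ) : ℍ :=
  ∫ p in sliceSet Ω i, star (f ((p.1 : ℍ) + p.2 • i)) * g ((p.1 : ℍ) + p.2 • i)

/-- The open unit ball `𝔹⁴ ⊆ ℍ`. -/
def B4 : Set ℍ := {q | ‖q‖ < 1}

/-- The open unit disk `D ⊆ ℝ²`. -/
def unitDisk : Set (ℝ × ℝ) := {p | p.1 ^ 2 + p.2 ^ 2 < 1}

/-- `‖f‖²_{A_i(𝔹⁴)} = ∫_D ‖f(x + yi)‖² dμ(x,y)`. -/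
def bergNormSqB (i : ℍ) (f : ℍ → ℍ) : ℝ :=
  ∫ p in unitDisk, ‖f ((p.1 : ℍ) + p.2 • i)‖ ^ 2

/-- The Bergman norm on `A_i(𝔹⁴)`. -/
def bergNormB (i : ℍ) (f : ℍ → ℍ) : ℝ := Real.sqrt (bergNormSqB i f)

/-- Membership in `A_i(𝔹⁴)`. -/
def MemBergB (i : ℍ) (f : ℍ → ℍ) : Prop :=
  SliceRegularOn f B4 ∧
  IntegrableOn (fun p : ℝ × ℝ => ‖f ((p.1 : ℍ) + p.2 • i)‖ ^ 2) unitDisk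

open Classical in
/-- `I_q`: the imaginary unit direction of `q` (an arbitrary fixed unit when `q` is real). -/
def Imu (q : ℍ) : ℍ := if q.im = 0 then ⟨0, 1, 0, 0⟩ else ‖q.im‖⁻¹ • q.im

/-- The extension operator `P_{k,·}`: for a slice function `g : ℝ² → ℍ` (representing
`x + y k ↦ g(x,y)`), `Pext k g (q) = ½[(1 + I_q k) g(x, −y) + (1 − I_q k) g(x, y)]`
where `q = x + I_q y`, `y = ‖im q‖ ≥ 0`. -/
def Pext (k : ℍ) (g : ℝ × ℝ → ℍ) (q : ℍ) : ℍ :=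
  (2⁻¹ : ℝ) • ((1 + Imu q * k) * g (q.re, -‖q.im‖) + (1 - Imu q * k) * g (q.re, ‖q.im‖))

/-- The slice function `x + y k ↦ a + b k + c l + d kl`. -/
def sliceFun (a b c d : ℝ × ℝ → ℝ) (k l : ℍ) (p : ℝ × ℝ) : ℍ :=
  (a p : ℍ) + b p • k + c p • l + d p • (k * l)

/-- `L²(D)` norm of a real function on the unit disk. -/
def L2D (a : ℝ × ℝ → ℝ) : ℝ := Real.sqrt (∫ p in unitDisk, a p ^ 2)

/-- Finiteness of the `L²(D)` norm. -/
def MemL2D (a : ℝ × ℝ → ℝ) : Prop := IntegrableOn (fun p => a p ^ 2) unitDisk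

/-- Harmonicity on the unit disk: `a` is `C²` and `∂²a/∂x² + ∂²a/∂y² = 0`. -/
def HarmonicOnDisk (a : ℝ × ℝ → ℝ) : Prop :=
  ContDiffOn ℝ 2 a unitDisk ∧ ∀ p ∈ unitDisk,
    fderiv ℝ (fun q => fderiv ℝ a q (1, 0)) p (1, 0)
      + fderiv ℝ (fun q => fderiv ℝ a q (0, 1)) p (0, 1) = 0

/-- `(a,b)` is a pair of conjugate harmonic functions on `D`:
both harmonic and satisfying the Cauchy–Riemann equations. -/
def ConjHarmPair (a b : ℝ × ℝ → ℝ) : Prop :=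
  HarmonicOnDisk a ∧ HarmonicOnDisk b ∧
  ∀ p ∈ unitDisk,
    fderiv ℝ a p (1, 0) = fderiv ℝ b p (0, 1) ∧
    fderiv ℝ a p (0, 1) = -fderiv ℝ b p (1, 0)

/-- `(a,b) ∈ HL²(D)`. -/
def HLpair (a b : ℝ × ℝ → ℝ) : Prop := ConjHarmPair a b ∧ MemL2D a ∧ MemL2D b

/-- Raw data of an element of `HL(D)`: a 2×2 matrix `(a b; c d)` of real functions
on the disk together with a pair `(k,l)` of quaternions. -/
structure HLElem where
  a : ℝ × ℝ → ℝ
  b : ℝ × ℝ → ℝ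
  c : ℝ × ℝ → ℝ
  d : ℝ × ℝ → ℝ
  k : ℍ
  l : ℍ

/-- Membership in `HL(D)`: `(a,b),(c,d) ∈ HL²(D)` and `(k,l) ∈ T`. -/
def HLElem.mem (A : HLElem) : Prop := HLpair A.a A.b ∧ HLpair A.c A.d ∧ OrthPair A.k A.l

/-- The bundle projection `P_{𝔹⁴}((a b; c d),(k,l)) = P_{k,l}[a + bk + cl + dkl]`. -/
def HLElem.proj (A : HLElem) : ℍ → ℍ := Pext A.k (sliceFun A.a A.b A.c A.d A.k A.l)

/-- The metric of `HL(D)`. -/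
def HLdist (A B : HLElem) : ℝ :=
  L2D (A.a - B.a) + L2D (A.b - B.b) + L2D (A.c - B.c) + L2D (A.d - B.d)
    + Real.sqrt (‖A.k - B.k‖ ^ 2 + ‖A.l - B.l‖ ^ 2)

/-- `Q_{k,l}[f] : (x,y) ↦ f(x + y k)`, the restriction of `f` to the slice `ℂ(k)`. -/
def Qsl (f : ℍ → ℍ) (k : ℍ) (p : ℝ × ℝ) : ℍ := f ((p.1 : ℍ) + p.2 • k)

/-- `D₁[f,k,l] = (Q[f] + conj(Q[f]))/2 = Re (Q[f])`. -/
def Dc1 (f : ℍ → ℍ) (k _l : ℍ) (p : ℝ × ℝ) : ℝ := (Qsl f k p).re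

/-- `D₂[f,k,l] = −(Q[f]·k + conj(Q[f]·k))/2 = −Re (Q[f]·k)`. -/
def Dc2 (f : ℍ → ℍ) (k _l : ℍ) (p : ℝ × ℝ) : ℝ := -(Qsl f k p * k).re

/-- `D₃[f,k,l] = −(Q[f]·l + conj(Q[f]·l))/2 = −Re (Q[f]·l)`. -/
def Dc3 (f : ℍ → ℍ) (k l : ℍ) (p : ℝ × ℝ) : ℝ := -(Qsl f k p * l).re

/-- `D₄[f,k,l] = (Q[f]·lk + conj(Q[f]·lk))/2 = Re (Q[f]·(lk))`. -/
def Dc4 (f : ℍ → ℍ) (k l : ℍ) (p : ℝ × ℝ) : ℝ := (Qsl f k p * (l * k)).re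

/-- The section map `S_{k,l}[f] = ((D₁ D₂; D₃ D₄), (k,l))`. -/
def Smap (f : ℍ → ℍ) (k l : ℍ) : HLElem :=
  ⟨Dc1 f k l, Dc2 f k l, Dc3 f k l, Dc4 f k l, k, l⟩

/-- The metric `ρ_i` on `A_i(𝔹⁴) × T`. -/
def rhoA (i : ℍ) (f : ℍ → ℍ) (k l : ℍ) (g : ℍ → ℍ) (m n : ℍ) : ℝ :=
  bergNormB i (f - g) + Real.sqrt (‖k - m‖ ^ 2 + ‖l - n‖ ^ 2)

/-! On the slice through `i`, the function
`F(z) = g(x + y i) - ½[(1 - ik) g(x + y k) + (1 + ik) g(x - y k)]` (`z = x + yI`) satisfies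
`∂F/∂y = i ∂F/∂x`, because `(1 ∓ ik)(±k) = i(1 ∓ ik)`. It is therefore holomorphic for the
complex structure on `ℍ` given by left multiplication by `i`, and since it vanishes on the real
axis it vanishes identically (the representation formula). Hence
`g(x + y i) - g(x + y k) = ½(1 + ik)(g(x - y k) - g(x + y k))` with `‖1 + ik‖ = ‖i - k‖`;
integrating `‖(a - b)/2‖² ≤ (‖a‖² + ‖b‖²)/2` over the disk, which is invariant under `y ↦ -y`,
gives the bound even without the factor `√2`. -/

open Metric Topology

namespace Sph2

variable {i : ℍ}

lemma neg (hi : Sph2 i) : Sph2 (-i) := ⟨by simp [hi.1], by rw [norm_neg, hi.2]⟩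

lemma mul_self (hi : Sph2 i) : i * i = -1 := by
  have hsq := Quaternion.sq_eq_neg_normSq.2 hi.1
  rw [Quaternion.normSq_eq_norm_mul_self, hi.2] at hsq
  simpa [sq] using hsq

lemma norm_coe_add_smul (hi : Sph2 i) (x y : ℝ) : ‖(x : ℍ) + y • i‖ = √(x ^ 2 + y ^ 2) := by
  have hnormSq : Quaternion.normSq ((x : ℍ) + y • i) = x ^ 2 + y ^ 2 := by
    rw [Quaternion.normSq_add, Quaternion.normSq_coe, Quaternion.normSq_smul,
      Quaternion.normSq_eq_norm_mul_self i, hi.2]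
    simp [hi.1]
  rw [← hnormSq, Quaternion.normSq_eq_norm_mul_self, Real.sqrt_mul_self (norm_nonneg _)]

lemma norm_one_add_mul (hi : Sph2 i) (k : ℍ) : ‖1 + i * k‖ = ‖i - k‖ := by
  have h : -i * (1 + i * k) = k - i := by
    rw [neg_mul, mul_add, ← mul_assoc, hi.mul_self]; noncomm_ring
  rw [← norm_neg (i - k), neg_sub, ← h, norm_mul, norm_neg, hi.2, one_mul]

lemma one_sub_mul_mul (hi : Sph2 i) {k : ℍ} (hk : Sph2 k) : (1 - i * k) * k = i * (1 - i * k) := by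
  rw [sub_mul, mul_sub, mul_assoc, hk.mul_self, ← mul_assoc i i, hi.mul_self]
  noncomm_ring

lemma one_add_mul_mul_neg (hi : Sph2 i) {k : ℍ} (hk : Sph2 k) :
    (1 + i * k) * -k = i * (1 + i * k) := by
  rw [add_mul, mul_add, mul_neg, mul_neg, mul_assoc, hk.mul_self, ← mul_assoc i i, hi.mul_self]
  noncomm_ring

end Sph2

def sliceEmb (j : ℍ) : ℂ →L[ℝ] ℍ := Complex.reCLM.smulRight 1 + Complex.imCLM.smulRight j

@[simp]
lemma sliceEmb_apply (j : ℍ) (z : ℂ) : sliceEmb j z = (z.re : ℍ) + z.im • j := by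
  simp [sliceEmb, Quaternion.algebraMap_def, ← Algebra.algebraMap_eq_smul_one]

lemma Sph2.norm_sliceEmb {i : ℍ} (hi : Sph2 i) (z : ℂ) : ‖sliceEmb i z‖ = ‖z‖ := by
  rw [sliceEmb_apply, hi.norm_coe_add_smul, Complex.norm_eq_sqrt_sq_add_sq]

def SliceHolomorphicAt (i : ℍ) (F : ℂ → ℍ) (z : ℂ) : Prop :=
  ∃ L : ℂ →L[ℝ] ℍ, HasFDerivAt F L z ∧ L Complex.I = i * L 1

namespace SliceHolomorphicAt

variable {i j : ℍ} {F G : ℂ → ℍ} {z : ℂ}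

lemma add (hF : SliceHolomorphicAt i F z) (hG : SliceHolomorphicAt i G z) :
    SliceHolomorphicAt i (fun w => F w + G w) z := by
  obtain ⟨L, hL, hLI⟩ := hF
  obtain ⟨M, hM, hMI⟩ := hG
  exact ⟨L + M, hL.add hM, by simp [hLI, hMI, mul_add]⟩

lemma sub (hF : SliceHolomorphicAt i F z) (hG : SliceHolomorphicAt i G z) :
    SliceHolomorphicAt i (fun w => F w - G w) z := by
  obtain ⟨L, hL, hLI⟩ := hF
  obtain ⟨M, hM, hMI⟩ := hG
  exact ⟨L - M, hL.sub hM, by simp [hLI, hMI, mul_sub]⟩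

lemma const_smul (hF : SliceHolomorphicAt i F z) (r : ℝ) :
    SliceHolomorphicAt i (fun w => r • F w) z := by
  obtain ⟨L, hL, hLI⟩ := hF
  exact ⟨r • L, hL.const_smul r, by simp [hLI]⟩

lemma const_mul (hF : SliceHolomorphicAt j F z) {a : ℍ} (ha : a * j = i * a) :
    SliceHolomorphicAt i (fun w => a * F w) z := by
  obtain ⟨L, hL, hLI⟩ := hF
  refine ⟨(ContinuousLinearMap.mul ℝ ℍ a).comp L,
    (ContinuousLinearMap.mul ℝ ℍ a).hasFDerivAt.comp z hL, ?_⟩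
  simp [hLI, ← mul_assoc, ha]

end SliceHolomorphicAt

lemma SliceRegularOn.sliceHolomorphicAt {f : ℍ → ℍ} {Ω : Set ℍ} (hf : SliceRegularOn f Ω)
    {j : ℍ} (hj : Sph2 j) {z : ℂ} (hz : sliceEmb j z ∈ Ω) :
    SliceHolomorphicAt j (fun w => f (sliceEmb j w)) z := by
  rw [sliceEmb_apply] at hz
  obtain ⟨hd, hcr⟩ := hf hj z.re z.im hz
  rw [← sliceEmb_apply] at hd hcr
  refine ⟨(fderiv ℝ f (sliceEmb j z)).comp (sliceEmb j),
    hd.hasFDerivAt.comp z (sliceEmb j).hasFDerivAt, ?_⟩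
  have hcr' := congrArg (j * ·) hcr
  simp only [mul_add, ← mul_assoc, hj.mul_self, neg_one_mul, mul_zero] at hcr'
  have hI : sliceEmb j Complex.I = j := by simp
  have h1 : sliceEmb j 1 = 1 := by simp
  simp only [ContinuousLinearMap.comp_apply, hI, h1]
  exact (add_neg_eq_zero.1 hcr').symm

abbrev Sph2.normedSpaceComplex {i : ℍ} (hi : Sph2 i) : NormedSpace ℂ ℍ :=
  letI := (Complex.liftAux i hi.mul_self).toRingHom.toModule
  { norm_smul_le := fun z q => by
      change ‖Complex.liftAux i hi.mul_self z * q‖ ≤ _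
      rw [norm_mul, Complex.liftAux_apply, Quaternion.algebraMap_def, ← sliceEmb_apply,
        hi.norm_sliceEmb] }

lemma Sph2.isScalarTower {i : ℍ} (hi : Sph2 i) :
    letI := hi.normedSpaceComplex
    IsScalarTower ℝ ℂ ℍ :=
  letI := hi.normedSpaceComplex
  ⟨fun r z q => by
    change Complex.liftAux i hi.mul_self (r • z) * q = r • (Complex.liftAux i hi.mul_self z * q)
    rw [map_smul, smul_mul_assoc]⟩

theorem SliceHolomorphicAt.eqOn_zero_of_preconnected_of_frequently_eq_zero {i : ℍ} (hi : Sph2 i)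
    {F : ℂ → ℍ} {U : Set ℂ} (hU : IsOpen U) (hU' : IsPreconnected U)
    (hF : ∀ z ∈ U, SliceHolomorphicAt i F z) {z₀ : ℂ} (hz₀ : z₀ ∈ U)
    (hfreq : ∃ᶠ z in 𝓝[≠] z₀, F z = 0) : Set.EqOn F 0 U := by
  let _ := hi.normedSpaceComplex
  have := hi.isScalarTower
  have hd : DifferentiableOn ℂ F U := fun z hz => by
    obtain ⟨L, hL, hLI⟩ := hF z hz
    have hlin : ((1 : ℂ →L[ℂ] ℂ).smulRight (L 1)).restrictScalars ℝ = L := by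
      refine ContinuousLinearMap.ext fun w => ?_
      change Complex.liftAux i hi.mul_self w * L 1 = L w
      have hw : w = w.re • (1 : ℂ) + w.im • Complex.I := by simp [Complex.real_smul]
      rw [Complex.liftAux_apply, Quaternion.algebraMap_def, add_mul, Quaternion.coe_mul_eq_smul,
        smul_mul_assoc, ← hLI]
      conv_rhs => rw [hw, map_add, map_smul, map_smul]
    exact (hasFDerivAt_of_restrictScalars ℝ hL hlin).differentiableAt.differentiableWithinAt
  exact (hd.analyticOnNhd hU).eqOn_zero_of_preconnected_of_frequently_eq_zero hU' hz₀ hfreq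

lemma Complex.frequently_ofReal_nhdsNE {P : ℂ → Prop} (hP : ∀ s : ℝ, P s) (t : ℝ) :
    ∃ᶠ z in 𝓝[≠] (t : ℂ), P z := by
  have hlim : Filter.Tendsto ((↑) : ℝ → ℂ) (𝓝[≠] t) (𝓝[≠] (t : ℂ)) :=
    tendsto_nhdsWithin_of_tendsto_nhds_of_eventually_within _
      Complex.continuous_ofReal.continuousWithinAt
      (eventually_nhdsWithin_of_forall fun _ hs => Complex.ofReal_injective.ne hs)
  exact hlim.frequently (Filter.Frequently.of_forall hP)

lemma AxSymSDomain.isPreconnected_preimage_sliceEmb {Ω : Set ℍ} (hΩ : AxSymSDomain Ω) {i : ℍ}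
    (hi : Sph2 i) : IsPreconnected (sliceEmb i ⁻¹' Ω) := by
  have h := (hΩ.slice_connected hi).isPreconnected.image _
    Complex.equivRealProdCLM.symm.continuous.continuousOn
  rw [ContinuousLinearEquiv.image_symm_eq_preimage] at h
  convert h using 1
  ext z
  simp

theorem SliceRegularOn.representation_formula {Ω : Set ℍ} (hΩ : AxSymSDomain Ω) {f : ℍ → ℍ}
    (hf : SliceRegularOn f Ω) {i k : ℍ} (hi : Sph2 i) (hk : Sph2 k) {x y : ℝ}
    (hxy : (x : ℍ) + y • i ∈ Ω) :
    f ((x : ℍ) + y • i) =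
      (2⁻¹ : ℝ) • ((1 - i * k) * f ((x : ℍ) + y • k) + (1 + i * k) * f ((x : ℍ) + (-y) • k)) := by
  set F : ℂ → ℍ := fun z => f (sliceEmb i z) -
    (2⁻¹ : ℝ) • ((1 - i * k) * f (sliceEmb k z) + (1 + i * k) * f (sliceEmb (-k) z))
  have hmem : ∀ {j}, Sph2 j → ∀ z ∈ sliceEmb i ⁻¹' Ω, sliceEmb j z ∈ Ω := fun hj z hz => by
    rw [Set.mem_preimage, sliceEmb_apply] at hz
    simpa using hΩ.axial _ _ hi hz hj
  have hF : ∀ z ∈ sliceEmb i ⁻¹' Ω, SliceHolomorphicAt i F z := fun z hz =>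
    (hf.sliceHolomorphicAt hi hz).sub
      ((((hf.sliceHolomorphicAt hk (hmem hk z hz)).const_mul (hi.one_sub_mul_mul hk)).add
        ((hf.sliceHolomorphicAt hk.neg (hmem hk.neg z hz)).const_mul
          (hi.one_add_mul_mul_neg hk))).const_smul _)
  have hF_real : ∀ t : ℝ, F t = 0 := fun t => by
    simp only [F, sliceEmb_apply, Complex.ofReal_re, Complex.ofReal_im, zero_smul, add_zero,
      ← add_mul, sub_add_add_cancel, one_add_one_eq_two]
    rw [two_mul, ← two_smul ℝ, smul_smul]
    norm_num
  obtain ⟨_, ht, t, rfl⟩ := hΩ.real_nonempty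
  have hzero := SliceHolomorphicAt.eqOn_zero_of_preconnected_of_frequently_eq_zero hi
    (hΩ.isOpen.preimage (sliceEmb i).continuous) (hΩ.isPreconnected_preimage_sliceEmb hi) hF
    (z₀ := t) (by simpa using ht) (Complex.frequently_ofReal_nhdsNE hF_real t)
    (x := ⟨x, y⟩) (by simpa using hxy)
  simpa [F, sub_eq_zero, neg_smul, smul_neg] using hzero

lemma Sph2.coe_add_smul_mem_B4_iff {i : ℍ} (hi : Sph2 i) (x y : ℝ) :
    (x : ℍ) + y • i ∈ B4 ↔ x ^ 2 + y ^ 2 < 1 := by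
  rw [B4, Set.mem_ofPred_eq, hi.norm_coe_add_smul, Real.sqrt_lt' one_pos, one_pow]

lemma isAxSymSDomain_B4 : AxSymSDomain B4 := by
  have hball : B4 = ball 0 1 := by ext q; simp [B4]
  refine ⟨hball ▸ isOpen_ball, hball ▸ (convex_ball 0 1).isConnected ⟨0, by simp⟩,
    ⟨0, by simp [B4], 0, rfl⟩, fun i hi => ?_, fun x y i hi hxy j hj => ?_⟩
  · have hconv := (convex_ball (0 : ℍ) 1).linear_preimage
      ((sliceEmb i).comp Complex.equivRealProdCLM.symm.toContinuousLinearMap).toLinearMap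
    have hslice : {p : ℝ × ℝ | (p.1 : ℍ) + p.2 • i ∈ B4} =
        (sliceEmb i).comp Complex.equivRealProdCLM.symm.toContinuousLinearMap ⁻¹' ball 0 1 := by
      ext p
      simp [hball]
    exact Convex.isConnected (hslice ▸ hconv) ⟨0, by simp [B4]⟩
  · rwa [hj.coe_add_smul_mem_B4_iff, ← hi.coe_add_smul_mem_B4_iff]

lemma norm_two_inv_smul_mul_sub_sq_le {A : Type*} [NormedRing A] [NormedAlgebra ℝ A]
    (u a b : A) : ‖(2⁻¹ : ℝ) • (u * (a - b))‖ ^ 2 ≤ 2⁻¹ * ‖u‖ ^ 2 * (‖a‖ ^ 2 + ‖b‖ ^ 2) := by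
  have h : ‖(2⁻¹ : ℝ) • (u * (a - b))‖ ≤ 2⁻¹ * (‖u‖ * (‖a‖ + ‖b‖)) := by
    rw [norm_smul, Real.norm_of_nonneg (by norm_num)]
    gcongr
    exact (norm_mul_le _ _).trans (by gcongr; exact norm_sub_le _ _)
  calc _ ≤ (2⁻¹ * (‖u‖ * (‖a‖ + ‖b‖))) ^ 2 := by gcongr
    _ ≤ 2⁻¹ * ‖u‖ ^ 2 * (‖a‖ ^ 2 + ‖b‖ ^ 2) := by
      nlinarith [mul_nonneg (sq_nonneg ‖u‖) (sq_nonneg (‖a‖ - ‖b‖))]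

theorem SliceRegularOn.sub_eq_two_inv_smul {Ω : Set ℍ} (hΩ : AxSymSDomain Ω) {f : ℍ → ℍ}
    (hf : SliceRegularOn f Ω) {i k : ℍ} (hi : Sph2 i) (hk : Sph2 k) {x y : ℝ}
    (hxy : (x : ℍ) + y • i ∈ Ω) :
    f ((x : ℍ) + y • i) - f ((x : ℍ) + y • k) =
      (2⁻¹ : ℝ) • ((1 + i * k) * (f ((x : ℍ) + (-y) • k) - f ((x : ℍ) + y • k))) := by
  rw [hf.representation_formula hΩ hi hk hxy]
  simp only [sub_mul, add_mul, mul_sub, one_mul]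
  module

section Reflection

variable {E : Type*} [NormedAddCommGroup E]

lemma measurableSet_unitDisk : MeasurableSet unitDisk :=
  measurableSet_lt (by fun_prop) measurable_const

lemma measurePreserving_prodCongr_refl_neg :
    MeasurePreserving (MeasurableEquiv.prodCongr (.refl ℝ) (.neg ℝ)) :=
  (MeasurePreserving.id volume).prod (Measure.measurePreserving_neg volume)

lemma prodCongr_refl_neg_preimage_unitDisk :
    MeasurableEquiv.prodCongr (.refl ℝ) (.neg ℝ) ⁻¹' unitDisk = unitDisk := by
  ext p
  change p.1 ^ 2 + (-p.2) ^ 2 < 1 ↔ _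
  rw [neg_sq]
  rfl

lemma integrableOn_unitDisk_comp_neg_snd {f : ℝ × ℝ → E} (hf : IntegrableOn f unitDisk) :
    IntegrableOn (fun p => f (p.1, -p.2)) unitDisk := by
  have h := (measurePreserving_prodCongr_refl_neg.integrableOn_comp_preimage
    (MeasurableEquiv.measurableEmbedding _)).2 hf
  rwa [prodCongr_refl_neg_preimage_unitDisk] at h

lemma setIntegral_unitDisk_comp_neg_snd [NormedSpace ℝ E] (f : ℝ × ℝ → E) :
    ∫ p in unitDisk, f (p.1, -p.2) = ∫ p in unitDisk, f p := by
  have h := measurePreserving_prodCongr_refl_neg.setIntegral_preimage_emb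
    (MeasurableEquiv.measurableEmbedding _) f unitDisk
  rwa [prodCongr_refl_neg_preimage_unitDisk] at h

end Reflection

theorem setIntegral_norm_slice_sub_sq_le {k : ℍ} (hk : Sph2 k) {g : ℍ → ℍ} (hg : MemBergB k g)
    {i : ℍ} (hi : Sph2 i) :
    ∫ p in unitDisk, ‖g ((p.1 : ℍ) + p.2 • i) - g ((p.1 : ℍ) + p.2 • k)‖ ^ 2 ≤
      ‖i - k‖ ^ 2 * bergNormSqB k g := by
  obtain ⟨hreg, hint⟩ := hg
  set G : ℝ × ℝ → ℝ := fun p => ‖g ((p.1 : ℍ) + p.2 • k)‖ ^ 2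
  have hint' := integrableOn_unitDisk_comp_neg_snd hint
  have hbound : ∀ p ∈ unitDisk, ‖g ((p.1 : ℍ) + p.2 • i) - g ((p.1 : ℍ) + p.2 • k)‖ ^ 2 ≤
      2⁻¹ * ‖i - k‖ ^ 2 * (G (p.1, -p.2) + G p) := fun p hp => by
    rw [hreg.sub_eq_two_inv_smul isAxSymSDomain_B4 hi hk ((hi.coe_add_smul_mem_B4_iff _ _).2 hp),
      ← hi.norm_one_add_mul k]
    exact norm_two_inv_smul_mul_sub_sq_le _ _ _
  calc _ ≤ ∫ p in unitDisk, 2⁻¹ * ‖i - k‖ ^ 2 * (G (p.1, -p.2) + G p) :=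
        integral_mono_of_nonneg (.of_forall fun _ => by positivity) ((hint'.add hint).const_mul _)
          (ae_restrict_of_forall_mem measurableSet_unitDisk hbound)
    _ = ‖i - k‖ ^ 2 * bergNormSqB k g := by
        rw [integral_const_mul, integral_add hint' hint, setIntegral_unitDisk_comp_neg_snd G,
          bergNormSqB]
        ring

/-- `(∫_D ‖g(x+iy) − g(x+ky)‖² dμ)^{1/2} ≤ √2 ‖i − k‖ ‖g‖_{A_k(𝔹⁴)}`. -/
theorem slice_difference_bound (k : ℍ) (hk : Sph2 k)
    (g : ℍ → ℍ) (hg : MemBergB k g) (i : ℍ) (hi : Sph2 i) :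
    Real.sqrt (∫ p in unitDisk,
        ‖g ((p.1 : ℍ) + p.2 • i) - g ((p.1 : ℍ) + p.2 • k)‖ ^ 2)
      ≤ Real.sqrt 2 * ‖i - k‖ * bergNormB k g := by
  calc _ ≤ √(‖i - k‖ ^ 2 * bergNormSqB k g) :=
        Real.sqrt_le_sqrt (setIntegral_norm_slice_sub_sq_le hk hg hi)
    _ = ‖i - k‖ * bergNormB k g := by
      rw [Real.sqrt_mul (sq_nonneg _), Real.sqrt_sq (norm_nonneg _), bergNormB]
    _ ≤ √2 * (‖i - k‖ * bergNormB k g) :=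
      le_mul_of_one_le_left (mul_nonneg (norm_nonneg _) (Real.sqrt_nonneg _))
        Real.one_lt_sqrt_two.le
    _ = √2 * ‖i - k‖ * bergNormB k g := (mul_assoc _ _ _).symm
end
end

section
/- Well-definedness of the section: Let i ∈ 𝕊², let f ∈ A_i(𝔹⁴), and let (k,l) ∈ T. Then the functions D₁[f,k,l], D₂[f,k,l], D₃[f,k,l], D₄[f,k,l] : D → ℝ are real-valued, the pairs (D₁[f,k,l], D₂[f,k,l]) and (D₃[f,k,l], D₄[f,k,l]) are pairs of conjugate harmonic functions on D, and each D_m[f,k,l] has finite L²(D) norm; hence S_{k,l}[f] := ((D₁ D₂; D₃ D₄), (k,l)) belongs to HL(D). -/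
noncomputable section

open MeasureTheory Filter

/-! On the slice `ℂ(k)`, slice regularity reads `∂Q/∂y = k ∂Q/∂x` for `Q = Q_{k,l}[f]`. Hence for
every `w ∈ ℍ` the coordinates `(Re (Q w), -Re (Q w k))` form a holomorphic function on the unit
disk of `ℂ`, whose real and imaginary parts are conjugate harmonic; `w = 1` and `w = -l` give
`(D₁, D₂)` and `(D₃, D₄)`. Square integrability on `ℂ(k)` comes from the representation formula
`f(x + yk) = ½[(1 - ki) f(x + yi) + (1 + ki) f(x - yi)]`: both sides satisfy the Cauchy–Riemann
equation of `ℂ(k)` and agree on the real axis, so their difference vanishes by the identity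
principle applied to its holomorphic coordinates. -/

lemma Quaternion.re_mul_comm {R : Type*} [CommRing R] (p q : Quaternion R) :
    (p * q).re = (q * p).re := by
  simp only [Quaternion.re_mul]; ring

lemma Sph2.mul_self_s17 {k : ℍ} (hk : Sph2 k) : k * k = -1 := by
  rw [← sq, Quaternion.sq_eq_neg_normSq.mpr hk.1, Quaternion.normSq_eq_norm_mul_self, hk.2,
    mul_one, Quaternion.coe_one]

lemma Sph2.normSq_slice {j : ℍ} (hj : Sph2 j) (x y : ℝ) :
    Quaternion.normSq ((x : ℍ) + y • j) = x ^ 2 + y ^ 2 := by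
  have hj1 : Quaternion.normSq j = 1 := by
    rw [Quaternion.normSq_eq_norm_mul_self, hj.2, mul_one]
  rw [Quaternion.normSq_def'] at hj1 ⊢
  simp only [Quaternion.re_add, Quaternion.imI_add, Quaternion.imJ_add, Quaternion.imK_add,
    Quaternion.re_coe, Quaternion.imI_coe, Quaternion.imJ_coe, Quaternion.imK_coe,
    Quaternion.re_smul, Quaternion.imI_smul, Quaternion.imJ_smul, Quaternion.imK_smul,
    smul_eq_mul, hj.1] at hj1 ⊢
  linear_combination y ^ 2 * hj1

lemma Sph2.slice_mem_B4 {j : ℍ} (hj : Sph2 j) {p : ℝ × ℝ} (hp : p ∈ unitDisk) :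
    (p.1 : ℍ) + p.2 • j ∈ B4 := by
  have h := hj.normSq_slice p.1 p.2
  rw [Quaternion.normSq_eq_norm_mul_self] at h
  have hp' : p.1 ^ 2 + p.2 ^ 2 < 1 := hp
  show ‖(p.1 : ℍ) + p.2 • j‖ < 1
  nlinarith [norm_nonneg ((p.1 : ℍ) + p.2 • j)]

lemma isOpen_unitDisk : IsOpen unitDisk :=
  (continuous_fst.pow 2 |>.add (continuous_snd.pow 2)).isOpen_preimage _ isOpen_Iio

lemma mem_unitDisk_iff_mem_ball (p : ℝ × ℝ) :
    p ∈ unitDisk ↔ Complex.equivRealProdCLM.symm p ∈ Metric.ball (0 : ℂ) 1 := by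
  rw [mem_ball_zero_iff, ← sq_lt_one_iff₀ (norm_nonneg _), Complex.sq_norm,
    Complex.normSq_apply]
  simp [unitDisk, sq]

lemma reflect_preimage_unitDisk : {p : ℝ × ℝ | (p.1, -p.2) ∈ unitDisk} = unitDisk := by
  ext p; simp [unitDisk]

/-- `u` is holomorphic on `s` for the complex structure on `ℍ` given by left multiplication
by `k`. -/
def CauchyRiemannOn (k : ℍ) (u : ℝ × ℝ → ℍ) (s : Set (ℝ × ℝ)) : Prop :=
  ∀ p ∈ s, DifferentiableAt ℝ u p ∧ fderiv ℝ u p (0, 1) = k * fderiv ℝ u p (1, 0)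

namespace CauchyRiemannOn

variable {i k : ℍ} {u v : ℝ × ℝ → ℍ} {s : Set (ℝ × ℝ)}

lemma continuousOn (hu : CauchyRiemannOn k u s) : ContinuousOn u s :=
  fun p hp => (hu p hp).1.continuousAt.continuousWithinAt

lemma add (hu : CauchyRiemannOn k u s) (hv : CauchyRiemannOn k v s) :
    CauchyRiemannOn k (fun p => u p + v p) s := fun p hp => by
  obtain ⟨hdu, hcu⟩ := hu p hp
  obtain ⟨hdv, hcv⟩ := hv p hp
  refine ⟨hdu.add hdv, ?_⟩
  simp only [fderiv_fun_add hdu hdv, add_apply, hcu, hcv, mul_add]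

lemma sub (hu : CauchyRiemannOn k u s) (hv : CauchyRiemannOn k v s) :
    CauchyRiemannOn k (fun p => u p - v p) s := fun p hp => by
  obtain ⟨hdu, hcu⟩ := hu p hp
  obtain ⟨hdv, hcv⟩ := hv p hp
  refine ⟨hdu.sub hdv, ?_⟩
  simp only [fderiv_fun_sub hdu hdv, sub_apply, hcu, hcv, mul_sub]

lemma const_smul (hu : CauchyRiemannOn k u s) (r : ℝ) :
    CauchyRiemannOn k (fun p => r • u p) s := fun p hp => by
  obtain ⟨hd, hc⟩ := hu p hp
  refine ⟨hd.const_smul r, ?_⟩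
  simp only [fderiv_fun_const_smul hd, smul_apply, hc, mul_smul_comm]

lemma const_mul (hu : CauchyRiemannOn i u s) {c : ℍ} (hc : c * i = k * c) :
    CauchyRiemannOn k (fun p => c * u p) s := fun p hp => by
  obtain ⟨hd, hcr⟩ := hu p hp
  have hD : HasFDerivAt (fun p => c * u p)
      ((ContinuousLinearMap.mul ℝ ℍ c).comp (fderiv ℝ u p)) p :=
    (ContinuousLinearMap.mul ℝ ℍ c).hasFDerivAt.comp p hd.hasFDerivAt
  refine ⟨hD.differentiableAt, ?_⟩
  simp only [hD.fderiv, ContinuousLinearMap.comp_apply, ContinuousLinearMap.mul_apply', hcr,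
    ← mul_assoc, hc]

lemma comp_reflect (hu : CauchyRiemannOn i u s) :
    CauchyRiemannOn (-i) (fun p => u (p.1, -p.2)) {p | (p.1, -p.2) ∈ s} := fun p hp => by
  obtain ⟨hd, hcr⟩ := hu _ hp
  let R : ℝ × ℝ →L[ℝ] ℝ × ℝ :=
    (ContinuousLinearMap.id ℝ ℝ).prodMap (-ContinuousLinearMap.id ℝ ℝ)
  have hD : HasFDerivAt (fun p : ℝ × ℝ => u (p.1, -p.2))
      ((fderiv ℝ u (p.1, -p.2)).comp R) p :=
    hd.hasFDerivAt.comp p R.hasFDerivAt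
  refine ⟨hD.differentiableAt, ?_⟩
  have hR₁ : R (1, 0) = (1, 0) := by simp [R]
  have hR₂ : R (0, 1) = -(0, 1) := by simp [R]
  rw [hD.fderiv, ContinuousLinearMap.comp_apply, ContinuousLinearMap.comp_apply, hR₁, hR₂,
    map_neg, hcr, neg_mul]

lemma differentiableOn_complex (hu : CauchyRiemannOn k u unitDisk) {Φ : ℍ →L[ℝ] ℂ}
    (hΦ : ∀ q, Φ (k * q) = Complex.I * Φ q) :
    DifferentiableOn ℂ (fun z => Φ (u (Complex.equivRealProdCLM z))) (Metric.ball 0 1) := by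
  intro z hz
  set p := Complex.equivRealProdCLM z
  have hp : p ∈ unitDisk := by
    rwa [mem_unitDisk_iff_mem_ball, ContinuousLinearEquiv.symm_apply_apply]
  obtain ⟨hd, hcr⟩ := hu p hp
  have hD : HasFDerivAt (fun z => Φ (u (Complex.equivRealProdCLM z)))
      ((Φ.comp (fderiv ℝ u p)).comp Complex.equivRealProdCLM.toContinuousLinearMap) z :=
    Φ.hasFDerivAt.comp z (hd.hasFDerivAt.comp z Complex.equivRealProdCLM.hasFDerivAt)
  refine (hasFDerivAt_of_restrictScalars ℝ hD (f' := ContinuousLinearMap.toSpanSingleton ℂ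
    (Φ (fderiv ℝ u p (1, 0)))) ?_).differentiableAt.differentiableWithinAt
  ext v
  have hv : Complex.equivRealProdCLM v
      = v.re • ((1 : ℝ), (0 : ℝ)) + v.im • ((0 : ℝ), (1 : ℝ)) := by
    simp
  simp only [ContinuousLinearMap.coe_restrictScalars', ContinuousLinearMap.toSpanSingleton_apply,
    ContinuousLinearMap.comp_apply, ContinuousLinearEquiv.coe_coe, hv, map_add, map_smul, hcr, hΦ]
  conv_lhs => rw [← Complex.re_add_im v]
  simp only [Complex.real_smul, smul_eq_mul]
  ring

end CauchyRiemannOn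

lemma hasFDerivAt_slice (j : ℍ) (p : ℝ × ℝ) :
    HasFDerivAt (fun p : ℝ × ℝ => (p.1 : ℍ) + p.2 • j)
      ((ContinuousLinearMap.fst ℝ ℝ ℝ).smulRight (1 : ℍ) +
        (ContinuousLinearMap.snd ℝ ℝ ℝ).smulRight j) p := by
  convert ContinuousLinearMap.hasFDerivAt _ using 2 with q
  simp [Algebra.smul_def]

lemma SliceRegularOn.cauchyRiemannOn_Qsl {f : ℍ → ℍ} (hf : SliceRegularOn f B4) {j : ℍ}
    (hj : Sph2 j) : CauchyRiemannOn j (Qsl f j) unitDisk := fun p hp => by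
  obtain ⟨hd, hcr⟩ := hf hj p.1 p.2 (hj.slice_mem_B4 hp)
  have hD : HasFDerivAt (Qsl f j) _ p := hd.hasFDerivAt.comp p (hasFDerivAt_slice j p)
  refine ⟨hD.differentiableAt, ?_⟩
  have hcr' := congrArg (j * ·) hcr
  simp only [mul_add, ← mul_assoc, hj.mul_self_s17, neg_one_mul, mul_zero] at hcr'
  simpa [hD.fderiv] using (add_neg_eq_zero.mp hcr').symm

/-- For `w = 1` these are the coordinates of `q` along `1` and `k`. -/
def sliceCoord (k w : ℍ) : ℍ →L[ℝ] ℂ :=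
  LinearMap.toContinuousLinearMap
  { toFun := fun q => ⟨(q * w).re, -(q * (w * k)).re⟩
    map_add' := fun p q => by apply Complex.ext <;> simp [add_mul, -Quaternion.re_mul, add_comm]
    map_smul' := fun c p => by apply Complex.ext <;> simp [-Quaternion.re_mul] }

@[simp] lemma sliceCoord_re (k w q : ℍ) : (sliceCoord k w q).re = (q * w).re := rfl

@[simp] lemma sliceCoord_im (k w q : ℍ) : (sliceCoord k w q).im = -(q * (w * k)).re := rfl

lemma sliceCoord_mul_left {k : ℍ} (hk : k * k = -1) (w q : ℍ) :
    sliceCoord k w (k * q) = Complex.I * sliceCoord k w q := by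
  apply Complex.ext
  · simp [mul_assoc, Quaternion.re_mul_comm k]
  · simp [mul_assoc, Quaternion.re_mul_comm k, hk]

lemma CauchyRiemannOn.eqOn_zero {k : ℍ} (hk : k * k = -1) {u : ℝ × ℝ → ℍ}
    (hu : CauchyRiemannOn k u unitDisk) (h0 : ∀ x : ℝ, u (x, 0) = 0) :
    Set.EqOn u 0 unitDisk := by
  intro p hp
  suffices h : ∀ w, (u p * w).re = 0 by
    simpa [Quaternion.self_mul_star] using h (star (u p))
  intro w
  set F := fun z => sliceCoord k w (u (Complex.equivRealProdCLM z))
  have hF : Set.EqOn F 0 (Metric.ball 0 1) := by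
    refine ((hu.differentiableOn_complex (sliceCoord_mul_left hk w)).analyticOnNhd
      Metric.isOpen_ball).eqOn_zero_of_preconnected_of_frequently_eq_zero
      (convex_ball 0 1).isPreconnected (Metric.mem_ball_self one_pos) ?_
    have hreal : Tendsto ((↑) : ℝ → ℂ) (nhdsWithin 0 {0}ᶜ) (nhdsWithin 0 {0}ᶜ) :=
      Complex.continuous_ofReal.continuousWithinAt.tendsto_nhdsWithin fun x hx => by simpa using hx
    exact hreal.frequently (Frequently.of_forall fun x => by simp [h0])
  simpa [F] using congrArg Complex.re (hF ((mem_unitDisk_iff_mem_ball p).mp hp))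

/-- The representation formula. -/
lemma SliceRegularOn.Qsl_eq {f : ℍ → ℍ} (hf : SliceRegularOn f B4) {i k : ℍ} (hi : Sph2 i)
    (hk : Sph2 k) {p : ℝ × ℝ} (hp : p ∈ unitDisk) :
    Qsl f k p
      = (2⁻¹ : ℝ) • ((1 - k * i) * Qsl f i p + (1 + k * i) * Qsl f i (p.1, -p.2)) := by
  have hcr_i := hf.cauchyRiemannOn_Qsl hi
  have hW₁ := hcr_i.const_mul (c := 1 - k * i) (k := k) (by
    rw [sub_mul, mul_sub, one_mul, mul_one, mul_assoc, hi.mul_self_s17, ← mul_assoc, hk.mul_self_s17]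
    noncomm_ring)
  have hW₂ := hcr_i.comp_reflect.const_mul (c := 1 + k * i) (k := k) (by
    rw [add_mul, mul_add, one_mul, mul_one, mul_neg, mul_assoc, hi.mul_self_s17, ← mul_assoc,
      hk.mul_self_s17]
    noncomm_ring)
  rw [reflect_preimage_unitDisk] at hW₂
  refine sub_eq_zero.mp (((hf.cauchyRiemannOn_Qsl hk).sub
    ((hW₁.add hW₂).const_smul (2⁻¹ : ℝ))).eqOn_zero hk.mul_self_s17 (fun x => ?_) hp)
  simp only [Qsl, neg_zero, zero_smul, add_zero, ← add_mul, sub_add_add_cancel,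
    one_add_one_eq_two]
  rw [two_mul, ← two_smul ℝ, smul_smul, inv_mul_cancel₀ two_ne_zero, one_smul, sub_self]

lemma MeasureTheory.MemLp.comp_reflect_unitDisk {E : Type*} [NormedAddCommGroup E]
    {u : ℝ × ℝ → E} (hu : MemLp u 2 (volume.restrict unitDisk)) :
    MemLp (fun p => u (p.1, -p.2)) 2 (volume.restrict unitDisk) := by
  have hR : MeasurePreserving (fun p : ℝ × ℝ => (p.1, -p.2)) :=
    (MeasurePreserving.id volume).prod (Measure.measurePreserving_neg volume)
  have := hR.restrict_preimage isOpen_unitDisk.measurableSet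
  rw [Set.preimage, reflect_preimage_unitDisk] at this
  exact hu.comp_measurePreserving this

lemma MemBergB.memLp_Qsl_self {i : ℍ} {f : ℍ → ℍ} (hf : MemBergB i f) (hi : Sph2 i) :
    MemLp (Qsl f i) 2 (volume.restrict unitDisk) :=
  (memLp_two_iff_integrable_sq_norm ((hf.1.cauchyRiemannOn_Qsl hi).continuousOn.aestronglyMeasurable
    isOpen_unitDisk.measurableSet)).mpr hf.2

lemma MemBergB.memLp_Qsl {i k : ℍ} {f : ℍ → ℍ} (hf : MemBergB i f) (hi : Sph2 i)
    (hk : Sph2 k) :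
    MemLp (Qsl f k) 2 (volume.restrict unitDisk) := by
  have hfi := hf.memLp_Qsl_self hi
  refine MemLp.ae_eq (ae_restrict_of_forall_mem isOpen_unitDisk.measurableSet
    fun p hp => (hf.1.Qsl_eq hi hk hp).symm) ?_
  exact ((hfi.const_mul _).add (hfi.comp_reflect_unitDisk.const_mul _)).const_smul (2⁻¹ : ℝ)

section Harmonic

open Complex Topology

lemma fderiv_comp_equivRealProdCLM_symm {F : ℂ → ℂ} {q : ℝ × ℝ}
    (hF : DifferentiableAt ℂ F (equivRealProdCLM.symm q)) (L : ℂ →L[ℝ] ℝ)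
    (v : ℝ × ℝ) :
    fderiv ℝ (fun p => L (F (equivRealProdCLM.symm p))) q v
      = L (equivRealProdCLM.symm v * deriv F (equivRealProdCLM.symm q)) := by
  have hD : HasFDerivAt (fun p => L (F (equivRealProdCLM.symm p))) _ q :=
    L.hasFDerivAt.comp q ((hF.hasDerivAt.hasFDerivAt.restrictScalars ℝ).comp q
      equivRealProdCLM.symm.hasFDerivAt)
  simp [hD.fderiv]

lemma harmonicOnDisk_comp {F : ℂ → ℂ} (hF : DifferentiableOn ℂ F (Metric.ball 0 1))
    (L : ℂ →L[ℝ] ℝ) : HarmonicOnDisk (fun p => L (F (equivRealProdCLM.symm p))) := by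
  have hA := hF.analyticOnNhd Metric.isOpen_ball
  have hmaps : Set.MapsTo equivRealProdCLM.symm unitDisk (Metric.ball 0 1) :=
    fun p hp => (mem_unitDisk_iff_mem_ball p).mp hp
  refine ⟨L.contDiff.comp_contDiffOn
    (((hA.contDiffOn Metric.isOpen_ball.uniqueDiffOn).restrict_scalars ℝ).comp
      equivRealProdCLM.symm.contDiff.contDiffOn hmaps), fun p hp => ?_⟩
  have hsecond : ∀ v,
      fderiv ℝ (fun q => fderiv ℝ (fun p => L (F (equivRealProdCLM.symm p))) q v) p v
        = L (equivRealProdCLM.symm v *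
            (equivRealProdCLM.symm v * deriv (deriv F) (equivRealProdCLM.symm p))) := by
    intro v
    have hfirst : (fun q => fderiv ℝ (fun p => L (F (equivRealProdCLM.symm p))) q v) =ᶠ[𝓝 p]
        fun q => (L.comp (ContinuousLinearMap.mul ℝ ℂ (equivRealProdCLM.symm v)))
          (deriv F (equivRealProdCLM.symm q)) := by
      filter_upwards [isOpen_unitDisk.mem_nhds hp] with q hq
      exact fderiv_comp_equivRealProdCLM_symm (hA _ (hmaps hq)).differentiableAt L v
    rw [hfirst.fderiv_eq, fderiv_comp_equivRealProdCLM_symm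
      (hA.deriv _ (hmaps hp)).differentiableAt]
    simp
  rw [hsecond, hsecond]
  simp [equivRealProdCLM_symm_apply, ← mul_assoc]

lemma conjHarmPair_re_im {F : ℂ → ℂ} (hF : DifferentiableOn ℂ F (Metric.ball 0 1)) :
    ConjHarmPair (fun p => (F (equivRealProdCLM.symm p)).re)
      (fun p => (F (equivRealProdCLM.symm p)).im) := by
  refine ⟨harmonicOnDisk_comp hF reCLM, harmonicOnDisk_comp hF imCLM, fun p hp => ?_⟩
  have hd := hF.differentiableAt
    (Metric.isOpen_ball.mem_nhds ((mem_unitDisk_iff_mem_ball p).mp hp))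
  have hre := fderiv_comp_equivRealProdCLM_symm hd reCLM
  have him := fderiv_comp_equivRealProdCLM_symm hd imCLM
  simp only [reCLM_apply, imCLM_apply] at hre him
  rw [hre, hre, him, him]
  simp [equivRealProdCLM_symm_apply]

end Harmonic

lemma hLpair_Qsl_mul {i k : ℍ} {f : ℍ → ℍ} (hf : MemBergB i f) (hi : Sph2 i) (hk : Sph2 k)
    (w : ℍ) : HLpair (fun p => (Qsl f k p * w).re) (fun p => -(Qsl f k p * (w * k)).re) := by
  have hF := (hf.1.cauchyRiemannOn_Qsl hk).differentiableOn_complex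
    (sliceCoord_mul_left hk.mul_self_s17 w)
  have hL2 := hf.memLp_Qsl hi hk
  refine ⟨by simpa using conjHarmPair_re_im hF, ?_, ?_⟩
  · exact ((Complex.reCLM.comp (sliceCoord k w)).comp_memLp' hL2).integrable_sq
  · exact ((Complex.imCLM.comp (sliceCoord k w)).comp_memLp' hL2).integrable_sq

/-- Well-definedness of the section: the components `D₁,…,D₄` of `f ∈ A_i(𝔹⁴)` form
conjugate harmonic pairs `(D₁,D₂)` and `(D₃,D₄)` of finite `L²(D)` norm, so
`S_{k,l}[f] ∈ HL(D)`. -/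
theorem section_well_defined (i : ℍ) (hi : Sph2 i)
    (f : ℍ → ℍ) (hf : MemBergB i f) (k l : ℍ) (hkl : OrthPair k l) :
    HLpair (Dc1 f k l) (Dc2 f k l) ∧
    HLpair (Dc3 f k l) (Dc4 f k l) ∧
    (Smap f k l).mem := by
  have h₁ : HLpair (Dc1 f k l) (Dc2 f k l) := by
    have h := hLpair_Qsl_mul hf hi hkl.1 1
    simp only [mul_one, one_mul] at h
    exact h
  have h₂ : HLpair (Dc3 f k l) (Dc4 f k l) := by
    have h := hLpair_Qsl_mul hf hi hkl.1 (-l)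
    simp only [mul_neg, neg_mul, Quaternion.re_neg, neg_neg] at h
    exact h
  exact ⟨h₁, h₂, h₁, h₂, hkl⟩
end
end
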